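/- arXiv:2207.02989 — 3 statements merged into one kernel-verified Lean document; each statement's English description precedes it below -/
import Mathlib

section
/- Let φ : [0,1] → ℝ be continuous and strictly increasing, and let β_a have the Beta(a,1) distribution. Then the map a ↦ E[φ(β_a)] on (0,∞) is continuous, strictly increasing, and satisfies lim_{a→0⁺} E[φ(β_a)] = φ(0) and lim_{a→∞} E[φ(β_a)] = φ(1). -/
open MeasureTheory Set Filter

namespace BetaAux

/-- The map `u ↦ u ^ (1/a)` sends `Icc 0 1` into itself, continuously, for `a > 0`. -/
lemma contOn_rpow (a : ℝ) (ha : 0 < a) :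
    ContinuousOn (fun u : ℝ => u ^ (1 / a)) (Icc 0 1) := by
  intro u hu
  exact (Real.continuousAt_rpow_const u (1 / a)
    (Or.inr (by positivity))).continuousWithinAt

lemma maps_rpow (a : ℝ) (ha : 0 < a) :
    MapsTo (fun u : ℝ => u ^ (1 / a)) (Icc 0 1) (Icc 0 1) := by
  intro u hu
  exact ⟨Real.rpow_nonneg hu.1 _, Real.rpow_le_one hu.1 hu.2 (by positivity)⟩

lemma integrable_comp (φ : ℝ → ℝ) (hc : ContinuousOn φ (Icc 0 1)) {a : ℝ} (ha : 0 < a) :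
    IntegrableOn (fun u : ℝ => φ (u ^ (1 / a))) (Ioo 0 1) := by
  have h : ContinuousOn (fun u : ℝ => φ (u ^ (1 / a))) (Icc 0 1) :=
    hc.comp (contOn_rpow a ha) (maps_rpow a ha)
  exact (h.integrableOn_compact isCompact_Icc).mono_set Ioo_subset_Icc_self

/-- Change of variables: the Beta(a,1) expectation as `∫₀¹ φ(u^{1/a}) du`. -/
lemma change_of_var (φ : ℝ → ℝ) {a : ℝ} (ha : 0 < a) :
    ∫ x in Ioo (0:ℝ) 1, φ x * (a * x ^ (a - 1)) =
      ∫ u in Ioo (0:ℝ) 1, φ (u ^ (1 / a)) := by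
  have key := integral_comp_rpow_Ioi
    (g := (Ioo (0:ℝ) 1).indicator (fun y => φ (y ^ (1 / a)))) (p := a) ha.ne'
  have hmem : ∀ x : ℝ, 0 < x → (x ^ a ∈ Ioo (0:ℝ) 1 ↔ x ∈ Ioo (0:ℝ) 1) := by
    intro x hx
    constructor
    · rintro ⟨h1, h2⟩
      refine ⟨hx, ?_⟩
      by_contra hle
      push_neg at hle
      exact absurd (Real.one_le_rpow hle ha.le) (not_le.mpr h2)
    · rintro ⟨h1, h2⟩
      exact ⟨Real.rpow_pos_of_pos hx a, Real.rpow_lt_one hx.le h2 ha⟩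
  have hL : (∫ x in Ioi (0:ℝ),
      (|a| * x ^ (a - 1)) • (Ioo (0:ℝ) 1).indicator (fun y => φ (y ^ (1 / a))) (x ^ a)) =
      ∫ x in Ioo (0:ℝ) 1, φ x * (a * x ^ (a - 1)) := by
    rw [show (∫ x in Ioo (0:ℝ) 1, φ x * (a * x ^ (a - 1))) =
        ∫ x in Ioi (0:ℝ), (Ioo (0:ℝ) 1).indicator
          (fun x => φ x * (a * x ^ (a - 1))) x by
      rw [setIntegral_indicator measurableSet_Ioo]
      congr 1
      rw [inter_eq_right.mpr (fun x hx => hx.1)]]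
    refine setIntegral_congr_fun measurableSet_Ioi ?_
    intro x hx
    simp only [mem_Ioi] at hx
    dsimp only
    by_cases hxm : x ∈ Ioo (0:ℝ) 1
    · rw [indicator_of_mem hxm, indicator_of_mem ((hmem x hx).mpr hxm)]
      have : (x ^ a) ^ (1 / a) = x := by
        rw [← Real.rpow_mul hx.le, mul_one_div, div_self ha.ne', Real.rpow_one]
      rw [this, smul_eq_mul, abs_of_pos ha]
      ring
    · rw [indicator_of_notMem hxm,
        indicator_of_notMem (fun h => hxm ((hmem x hx).mp h)), smul_zero]
  have hR : (∫ y in Ioi (0:ℝ),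
      (Ioo (0:ℝ) 1).indicator (fun y => φ (y ^ (1 / a))) y) =
      ∫ u in Ioo (0:ℝ) 1, φ (u ^ (1 / a)) := by
    rw [setIntegral_indicator measurableSet_Ioo, inter_eq_right.mpr (fun x hx => hx.1)]
  rw [← hL, key, hR]

end BetaAux

/-- For `φ` continuous and strictly increasing on `[0,1]`, the map
`a ↦ E[φ(β_a)] = ∫_0^1 φ(x)·a·x^(a-1) dx` is continuous and strictly increasing on `(0,∞)`,
tends to `φ(0)` as `a → 0⁺` and to `φ(1)` as `a → ∞`. -/
theorem beta_a_one_expectation_monotone (φ : ℝ → ℝ)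
    (hc : ContinuousOn φ (Icc 0 1)) (hm : StrictMonoOn φ (Icc 0 1)) :
    ContinuousOn (fun a : ℝ => ∫ x in Ioo (0:ℝ) 1, φ x * (a * x ^ (a - 1))) (Ioi 0) ∧
    StrictMonoOn (fun a : ℝ => ∫ x in Ioo (0:ℝ) 1, φ x * (a * x ^ (a - 1))) (Ioi 0) ∧
    Tendsto (fun a : ℝ => ∫ x in Ioo (0:ℝ) 1, φ x * (a * x ^ (a - 1)))
      (nhdsWithin 0 (Ioi 0)) (nhds (φ 0)) ∧
    Tendsto (fun a : ℝ => ∫ x in Ioo (0:ℝ) 1, φ x * (a * x ^ (a - 1)))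
      atTop (nhds (φ 1)) := by
  set G : ℝ → ℝ := fun a => ∫ u in Ioo (0:ℝ) 1, φ (u ^ (1 / a)) with hG
  have hEq : ∀ a ∈ Ioi (0:ℝ),
      (∫ x in Ioo (0:ℝ) 1, φ x * (a * x ^ (a - 1))) = G a :=
    fun a ha => BetaAux.change_of_var φ ha
  -- uniform bound for φ on [0,1]
  obtain ⟨M, hM⟩ := (isCompact_Icc (a := (0:ℝ)) (b := 1)).exists_bound_of_continuousOn hc
  have hbound : ∀ a : ℝ, 0 < a → ∀ u ∈ Ioo (0:ℝ) 1, ‖φ (u ^ (1 / a))‖ ≤ M := by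
    intro a ha u hu
    exact hM _ (BetaAux.maps_rpow a ha ⟨hu.1.le, hu.2.le⟩)
  have hMint : IntegrableOn (fun _ : ℝ => M) (Ioo 0 1) :=
    (integrableOn_const_iff (C := M)).mpr (Or.inr measure_Ioo_lt_top)
  have hmeas : ∀ a : ℝ, 0 < a →
      AEStronglyMeasurable (fun u : ℝ => φ (u ^ (1 / a)))
        (volume.restrict (Ioo (0:ℝ) 1)) :=
    fun a ha => (BetaAux.integrable_comp φ hc ha).1
  have hvol : (volume (Ioo (0:ℝ) 1)).toReal = 1 := by
    simp [Real.volume_Ioo]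
  -- generic dominated convergence for G along a filter
  have hDC : ∀ (l : Filter ℝ) [l.IsCountablyGenerated]
      (c : ℝ → ℝ), (∀ᶠ a in l, 0 < a) →
      (∀ u ∈ Ioo (0:ℝ) 1, Tendsto (fun a => φ (u ^ (1 / a))) l (nhds (c u))) →
      Tendsto G l (nhds (∫ u in Ioo (0:ℝ) 1, c u)) := by
    intro l _ c hl hptw
    refine tendsto_integral_filter_of_dominated_convergence (fun _ => M)
      (hl.mono fun a ha => hmeas a ha)
      (hl.mono fun a ha => ?_) hMint ?_
    · exact (ae_restrict_iff' measurableSet_Ioo).mpr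
        (Filter.Eventually.of_forall (hbound a ha))
    · exact (ae_restrict_iff' measurableSet_Ioo).mpr
        (Filter.Eventually.of_forall hptw)
  -- pointwise limits of the integrand
  have hpt_cont : ∀ a ∈ Ioi (0:ℝ), ∀ u ∈ Ioo (0:ℝ) 1,
      Tendsto (fun b => φ (u ^ (1 / b))) (nhds a) (nhds (φ (u ^ (1 / a)))) := by
    intro a ha u hu
    have ha' : (0:ℝ) < a := mem_Ioi.mp ha
    have hp : u ^ (1 / a) ∈ Ioo (0:ℝ) 1 :=
      ⟨Real.rpow_pos_of_pos hu.1 _, Real.rpow_lt_one hu.1.le hu.2 (by positivity)⟩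
    have hφ : ContinuousAt φ (u ^ (1 / a)) :=
      hc.continuousAt (Icc_mem_nhds hp.1 hp.2)
    have h1 : Tendsto (fun b : ℝ => u ^ (1 / b)) (nhds a) (nhds (u ^ (1 / a))) := by
      have hcu : ContinuousAt (fun t : ℝ => u ^ t) (1 / a) :=
        Real.continuousAt_const_rpow hu.1.ne'
      exact hcu.tendsto.comp (tendsto_const_nhds.div tendsto_id (ne_of_gt ha))
    exact hφ.tendsto.comp h1
  refine ⟨?_, ?_, ?_, ?_⟩
  · -- continuity
    refine ContinuousOn.congr (f := G) ?_ hEq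
    intro a ha
    have hev : ∀ᶠ b in nhdsWithin a (Ioi 0), (0:ℝ) < b :=
      eventually_mem_nhdsWithin
    exact (hDC (nhdsWithin a (Ioi 0)) (fun u => φ (u ^ (1 / a))) hev
      (fun u hu => (hpt_cont a ha u hu).mono_left nhdsWithin_le_nhds))
  · -- strict monotonicity
    intro a ha b hb hab
    dsimp only
    rw [hEq a ha, hEq b hb]
    have hia := BetaAux.integrable_comp φ hc (mem_Ioi.mp ha)
    have hib := BetaAux.integrable_comp φ hc (mem_Ioi.mp hb)
    have hlt : ∀ u ∈ Ioo (0:ℝ) 1,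
        φ (u ^ (1 / a)) < φ (u ^ (1 / b)) := by
      intro u hu
      have h1 : u ^ (1 / a) < u ^ (1 / b) :=
        Real.rpow_lt_rpow_of_exponent_gt hu.1 hu.2
          (one_div_lt_one_div_of_lt (mem_Ioi.mp ha) hab)
      exact hm (BetaAux.maps_rpow a (mem_Ioi.mp ha) ⟨hu.1.le, hu.2.le⟩)
        (BetaAux.maps_rpow b (mem_Ioi.mp hb) ⟨hu.1.le, hu.2.le⟩) h1
    have hsub : (0:ℝ) < ∫ u in Ioo (0:ℝ) 1,
        (φ (u ^ (1 / b)) - φ (u ^ (1 / a))) := by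
      rw [setIntegral_pos_iff_support_of_nonneg_ae]
      · refine lt_of_lt_of_le ?_
          (measure_mono (s := Ioo (0:ℝ) 1)
            (fun u hu => ⟨(sub_pos.mpr (hlt u hu)).ne', hu⟩))
        rw [Real.volume_Ioo]
        norm_num
      · exact (ae_restrict_iff' measurableSet_Ioo).mpr
          (Filter.Eventually.of_forall fun u hu => sub_nonneg.mpr (hlt u hu).le)
      · exact hib.sub hia
    rw [integral_sub hib hia] at hsub
    linarith
  · -- limit at 0⁺
    have h0 : Tendsto G (nhdsWithin 0 (Ioi 0)) (nhds (φ 0)) := by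
      have := hDC (nhdsWithin (0:ℝ) (Ioi 0)) (fun _ => φ 0)
        eventually_mem_nhdsWithin ?_
      · rwa [setIntegral_const, measureReal_def, hvol, one_smul] at this
      · intro u hu
        have hbase : Tendsto (fun t : ℝ => u ^ t) atTop (nhds 0) :=
          tendsto_rpow_atTop_of_base_lt_one u (by linarith [hu.1]) hu.2
        have h1 : Tendsto (fun a : ℝ => u ^ (1 / a)) (nhdsWithin 0 (Ioi 0))
            (nhds 0) := by
          have : Tendsto (fun a : ℝ => 1 / a) (nhdsWithin 0 (Ioi 0)) atTop := by
            simpa [one_div] using tendsto_inv_nhdsGT_zero (𝕜 := ℝ)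
          exact hbase.comp this
        have h2 : Tendsto (fun a : ℝ => u ^ (1 / a)) (nhdsWithin 0 (Ioi 0))
            (nhdsWithin 0 (Icc 0 1)) := by
          refine tendsto_nhdsWithin_of_tendsto_nhds_of_eventually_within _ h1 ?_
          filter_upwards [eventually_mem_nhdsWithin] with a ha
          exact BetaAux.maps_rpow a (mem_Ioi.mp ha) ⟨hu.1.le, hu.2.le⟩
        exact ((hc 0 ⟨le_refl 0, zero_le_one⟩).tendsto).comp h2
    exact h0.congr' (by filter_upwards [eventually_mem_nhdsWithin] with a ha
      using (hEq a ha).symm)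
  · -- limit at ∞
    have h1 : Tendsto G atTop (nhds (φ 1)) := by
      have := hDC atTop (fun _ => φ 1) (eventually_gt_atTop 0) ?_
      · rwa [setIntegral_const, measureReal_def, hvol, one_smul] at this
      · intro u hu
        have hbase : Tendsto (fun t : ℝ => u ^ t) (nhds 0) (nhds 1) := by
          have := (Real.continuousAt_const_rpow (a := u) (b := 0) hu.1.ne').tendsto
          rwa [Real.rpow_zero] at this
        have ht : Tendsto (fun a : ℝ => u ^ (1 / a)) atTop (nhds 1) := by
          have : Tendsto (fun a : ℝ => 1 / a) atTop (nhds 0) := by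
            simpa [one_div] using tendsto_inv_atTop_zero (𝕜 := ℝ)
          exact hbase.comp this
        have h2 : Tendsto (fun a : ℝ => u ^ (1 / a)) atTop
            (nhdsWithin 1 (Icc 0 1)) := by
          refine tendsto_nhdsWithin_of_tendsto_nhds_of_eventually_within _ ht ?_
          filter_upwards [eventually_gt_atTop (0:ℝ)] with a ha
          exact BetaAux.maps_rpow a ha ⟨hu.1.le, hu.2.le⟩
        exact ((hc 1 ⟨zero_le_one, le_refl 1⟩).tendsto).comp h2
    exact h1.congr' (by filter_upwards [eventually_gt_atTop (0:ℝ)] with a ha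
      using (hEq a ha).symm)
end

section
/- Let φ : [0,1] → ℝ be continuous and strictly increasing and let t ∈ (φ(0), φ(1)). Then there exists a unique a ∈ (0, ∞) such that ∫_0^1 φ(x)·a·x^{a−1} dx = t. -/
open MeasureTheory Set Filter Real Topology

namespace UniqueBetaAux

noncomputable def G (ψ : ℝ → ℝ) (a : ℝ) : ℝ := ∫ y in Ioo (0:ℝ) 1, ψ (y ^ a⁻¹)

lemma meas_aux {ψ : ℝ → ℝ} (hψ : Continuous ψ) (c : ℝ) :
    AEStronglyMeasurable (fun y : ℝ => ψ (y ^ c))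
      (volume.restrict (Ioo (0:ℝ) 1)) := by
  have : ContinuousOn (fun y : ℝ => ψ (y ^ c)) (Ioo (0:ℝ) 1) := fun y hy =>
    (hψ.continuousAt.comp (Real.continuousAt_rpow_const y c (Or.inl hy.1.ne'))).continuousWithinAt
  exact this.aestronglyMeasurable measurableSet_Ioo

lemma int_aux {ψ : ℝ → ℝ} (hψ : Continuous ψ) {C : ℝ} (hb : ∀ y, ‖ψ y‖ ≤ C) (c : ℝ) :
    IntegrableOn (fun y : ℝ => ψ (y ^ c)) (Ioo (0:ℝ) 1) := by
  have hCint : IntegrableOn (fun _ : ℝ => C) (Ioo (0:ℝ) 1) :=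
    integrableOn_const measure_Ioo_lt_top.ne
  exact hCint.mono' (meas_aux hψ c) (ae_of_all _ fun y => hb _)

lemma sub_eq {ψ : ℝ → ℝ} (hψ : Continuous ψ) {a : ℝ} (ha : 0 < a) :
    (∫ x in Ioo (0:ℝ) 1, ψ x * (a * x ^ (a - 1))) = G ψ a := by
  have key := integral_comp_rpow_Ioi
    (g := (Ioo (0:ℝ) 1).indicator fun y => ψ (y ^ a⁻¹)) ha.ne'
  have h1 : (∫ x in Ioi (0:ℝ),
      (|a| * x ^ (a - 1)) • (Ioo (0:ℝ) 1).indicator (fun y => ψ (y ^ a⁻¹)) (x ^ a))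
      = ∫ x in Ioo (0:ℝ) 1, ψ x * (a * x ^ (a - 1)) := by
    rw [setIntegral_congr_fun measurableSet_Ioi
        (g := fun x => (Ioo (0:ℝ) 1).indicator (fun x => ψ x * (a * x ^ (a - 1))) x) ?_,
      setIntegral_indicator measurableSet_Ioo,
      inter_eq_self_of_subset_right Ioo_subset_Ioi_self]
    intro x hx
    replace hx : (0:ℝ) < x := hx
    dsimp only
    by_cases hx1 : x < 1
    · have hxa : x ^ a ∈ Ioo (0:ℝ) 1 :=
        ⟨rpow_pos_of_pos hx a, rpow_lt_one hx.le hx1 ha⟩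
      rw [Set.indicator_of_mem hxa, Set.indicator_of_mem (show x ∈ Ioo (0:ℝ) 1 from ⟨hx, hx1⟩)]
      rw [Real.rpow_rpow_inv hx.le ha.ne', abs_of_pos ha, smul_eq_mul]; ring
    · have hxa : x ^ a ∉ Ioo (0:ℝ) 1 := fun h =>
        absurd h.2 (not_lt.2 (one_le_rpow (not_lt.1 hx1) ha.le))
      rw [Set.indicator_of_notMem hxa, Set.indicator_of_notMem
        (show x ∉ Ioo (0:ℝ) 1 from fun h => absurd h.2 (not_lt.2 (not_lt.1 hx1))), smul_zero]
  have h2 : (∫ y in Ioi (0:ℝ), (Ioo (0:ℝ) 1).indicator (fun y => ψ (y ^ a⁻¹)) y)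
      = G ψ a := by
    rw [setIntegral_indicator measurableSet_Ioo,
      inter_eq_self_of_subset_right Ioo_subset_Ioi_self, G]
  rw [← h1, key, h2]

lemma G_strictMono {ψ : ℝ → ℝ} (hψ : Continuous ψ)
    (hm : StrictMonoOn ψ (Icc 0 1)) {C : ℝ} (hb : ∀ y, ‖ψ y‖ ≤ C) :
    StrictMonoOn (G ψ) (Ioi (0:ℝ)) := by
  intro a ha b hb' hab
  replace ha : (0:ℝ) < a := ha
  replace hb' : (0:ℝ) < b := hb'
  have hIa := int_aux hψ hb a⁻¹
  have hIb := int_aux hψ hb b⁻¹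
  have hpos : 0 < ∫ y in Ioo (0:ℝ) 1, (ψ (y ^ b⁻¹) - ψ (y ^ a⁻¹)) := by
    have hlt : ∀ y ∈ Ioo (0:ℝ) 1, 0 < ψ (y ^ b⁻¹) - ψ (y ^ a⁻¹) := by
      intro y hy
      have h1 : y ^ a⁻¹ < y ^ b⁻¹ :=
        Real.rpow_lt_rpow_of_exponent_gt hy.1 hy.2 (by
          exact (inv_lt_inv₀ hb' ha).2 hab)
      have hainv : (0:ℝ) ≤ a⁻¹ := (inv_pos.2 ha).le
      have hbinv : (0:ℝ) ≤ b⁻¹ := (inv_pos.2 hb').le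
      have ha' : y ^ a⁻¹ ∈ Icc (0:ℝ) 1 :=
        ⟨(rpow_pos_of_pos hy.1 _).le, (rpow_le_one hy.1.le hy.2.le hainv)⟩
      have hb'' : y ^ b⁻¹ ∈ Icc (0:ℝ) 1 :=
        ⟨(rpow_pos_of_pos hy.1 _).le, (rpow_le_one hy.1.le hy.2.le hbinv)⟩
      exact sub_pos.2 (hm ha' hb'' h1)
    rw [setIntegral_pos_iff_support_of_nonneg_ae]
    · have hsub : Ioo (0:ℝ) 1 ⊆
          Function.support (fun y => ψ (y ^ b⁻¹) - ψ (y ^ a⁻¹)) ∩ Ioo (0:ℝ) 1 :=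
        fun y hy => ⟨(hlt y hy).ne', hy⟩
      refine lt_of_lt_of_le ?_ (measure_mono hsub)
      simp
    · refine (ae_restrict_iff' measurableSet_Ioo).2 (ae_of_all _ fun y hy => ?_)
      exact (hlt y hy).le
    · exact hIb.sub hIa
  have heq := integral_sub hIb hIa
  unfold G
  linarith [hpos, heq]

lemma G_tendsto_top {ψ : ℝ → ℝ} (hψ : Continuous ψ) {C : ℝ} (hb : ∀ y, ‖ψ y‖ ≤ C) :
    Tendsto (G ψ) atTop (𝓝 (ψ 1)) := by
  have h0 : (ψ 1) = ∫ y in Ioo (0:ℝ) 1, ψ 1 := by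
    simp [integral_const, Real.volume_Ioo]
  rw [h0]
  refine tendsto_integral_filter_of_dominated_convergence (fun _ => C)
    (Eventually.of_forall fun a => meas_aux hψ _)
    (Eventually.of_forall fun a => ae_of_all _ fun y => hb _)
    (integrableOn_const measure_Ioo_lt_top.ne)
    ?_
  refine (ae_restrict_iff' measurableSet_Ioo).2 (ae_of_all _ fun y hy => ?_)
  have h1 : Tendsto (fun a : ℝ => y ^ a⁻¹) atTop (𝓝 1) := by
    have h2 : Tendsto (fun a : ℝ => a⁻¹) atTop (𝓝 0) := tendsto_inv_atTop_zero
    have h3 : ContinuousAt (fun e : ℝ => y ^ e) 0 :=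
      Real.continuousAt_const_rpow hy.1.ne'
    have := h3.tendsto.comp h2
    simpa [Function.comp_def, Real.rpow_zero] using this
  exact (hψ.continuousAt.tendsto.comp h1)

lemma G_tendsto_zero {ψ : ℝ → ℝ} (hψ : Continuous ψ) {C : ℝ} (hb : ∀ y, ‖ψ y‖ ≤ C) :
    Tendsto (G ψ) (𝓝[>] 0) (𝓝 (ψ 0)) := by
  have h0 : (ψ 0) = ∫ y in Ioo (0:ℝ) 1, ψ 0 := by
    simp [integral_const, Real.volume_Ioo]
  rw [h0]
  refine tendsto_integral_filter_of_dominated_convergence (fun _ => C)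
    (Eventually.of_forall fun a => meas_aux hψ _)
    (Eventually.of_forall fun a => ae_of_all _ fun y => hb _)
    (integrableOn_const measure_Ioo_lt_top.ne)
    ?_
  refine (ae_restrict_iff' measurableSet_Ioo).2 (ae_of_all _ fun y hy => ?_)
  have h1 : Tendsto (fun a : ℝ => y ^ a⁻¹) (𝓝[>] 0) (𝓝 0) := by
    have h2 : Tendsto (fun a : ℝ => a⁻¹) (𝓝[>] (0:ℝ)) atTop := tendsto_inv_nhdsGT_zero
    have h3 : Tendsto (fun e : ℝ => y ^ e) atTop (𝓝 0) :=
      tendsto_rpow_atTop_of_base_lt_one y (by linarith [hy.1]) hy.2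
    exact h3.comp h2
  exact (hψ.continuousAt.tendsto.comp h1)

lemma G_continuousAt {ψ : ℝ → ℝ} (hψ : Continuous ψ) {C : ℝ} (hb : ∀ y, ‖ψ y‖ ≤ C)
    {a₀ : ℝ} (ha₀ : 0 < a₀) : ContinuousAt (G ψ) a₀ := by
  refine continuousAt_of_dominated
    (Eventually.of_forall fun a => meas_aux hψ _)
    (Eventually.of_forall fun a => ae_of_all _ fun y => hb _)
    (integrableOn_const measure_Ioo_lt_top.ne)
    ?_
  refine (ae_restrict_iff' measurableSet_Ioo).2 (ae_of_all _ fun y hy => ?_)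
  have h1 : ContinuousAt (fun a : ℝ => y ^ a⁻¹) a₀ := by
    have h2 : ContinuousAt (fun a : ℝ => a⁻¹) a₀ := continuousAt_inv₀ ha₀.ne'
    exact (Real.continuousAt_const_rpow hy.1.ne').comp h2
  exact hψ.continuousAt.comp h1

end UniqueBetaAux

open UniqueBetaAux

/-- For `φ` continuous and strictly increasing on `[0,1]` and a target
`t ∈ (φ(0), φ(1))`, there is a unique Beta parameter `a ∈ (0,∞)` with
`∫_0^1 φ(x)·a·x^(a-1) dx = t`. -/
theorem unique_beta_parameter (φ : ℝ → ℝ)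
    (hc : ContinuousOn φ (Icc 0 1)) (hm : StrictMonoOn φ (Icc 0 1))
    (t : ℝ) (ht : t ∈ Ioo (φ 0) (φ 1)) :
    ∃! a : ℝ, a ∈ Ioi (0:ℝ) ∧ (∫ x in Ioo (0:ℝ) 1, φ x * (a * x ^ (a - 1))) = t := by
  -- extend φ continuously to all of ℝ
  set ψ : ℝ → ℝ := IccExtend zero_le_one ((Icc (0:ℝ) 1).restrict φ) with hψdef
  have hψc : Continuous ψ := (continuousOn_iff_continuous_restrict.1 hc).Icc_extend'
  have hψeq : ∀ x ∈ Icc (0:ℝ) 1, ψ x = φ x := fun x hx => by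
    simp [hψdef, IccExtend_of_mem _ _ hx]; rfl
  have hψm : StrictMonoOn ψ (Icc 0 1) := fun x hx y hy hxy => by
    rw [hψeq x hx, hψeq y hy]; exact hm hx hy hxy
  obtain ⟨C, hC⟩ := isCompact_Icc.exists_bound_of_continuousOn hc
  have hbd : ∀ y : ℝ, ‖ψ y‖ ≤ C := by
    intro y
    have : ψ y = φ (projIcc 0 1 zero_le_one y : ℝ) := rfl
    rw [this]
    exact hC _ (projIcc 0 1 zero_le_one y).2
  have ht0 : ψ 0 < t := by rw [hψeq 0 (by norm_num)]; exact ht.1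
  have ht1 : t < ψ 1 := by rw [hψeq 1 (by norm_num)]; exact ht.2
  -- translate target integral to G
  have hGeq : ∀ a : ℝ, 0 < a →
      (∫ x in Ioo (0:ℝ) 1, φ x * (a * x ^ (a - 1))) = G ψ a := by
    intro a ha
    rw [← sub_eq hψc ha]
    refine setIntegral_congr_fun measurableSet_Ioo fun x hx => ?_
    rw [hψeq x ⟨hx.1.le, hx.2.le⟩]
  -- find endpoints
  have hmono := G_strictMono hψc hψm hbd
  obtain ⟨a₁, ha₁pos, ha₁⟩ : ∃ a₁ : ℝ, 0 < a₁ ∧ G ψ a₁ < t := by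
    have := (G_tendsto_zero hψc hbd).eventually (eventually_lt_nhds ht0)
    obtain ⟨a, ha, ha'⟩ := (this.and self_mem_nhdsWithin).exists
    exact ⟨a, ha', ha⟩
  obtain ⟨a₂, ha₂pos, ha₂⟩ : ∃ a₂ : ℝ, 0 < a₂ ∧ t < G ψ a₂ := by
    have := (G_tendsto_top hψc hbd).eventually (eventually_gt_nhds ht1)
    obtain ⟨a, ha, ha'⟩ := (this.and (eventually_gt_atTop 0)).exists
    exact ⟨a, ha', ha⟩
  have hlt : a₁ < a₂ := by
    by_contra h
    have : G ψ a₂ ≤ G ψ a₁ := by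
      rcases eq_or_lt_of_le (not_lt.1 h) with h' | h'
      · rw [h']
      · exact (hmono ha₂pos ha₁pos h').le
    linarith
  have hGcont : ContinuousOn (G ψ) (Icc a₁ a₂) := fun x hx =>
    (G_continuousAt hψc hbd (lt_of_lt_of_le ha₁pos hx.1)).continuousWithinAt
  obtain ⟨a, haI, haG⟩ := intermediate_value_Icc hlt.le hGcont
    (⟨ha₁.le, ha₂.le⟩ : t ∈ Icc (G ψ a₁) (G ψ a₂))
  have hapos : (0:ℝ) < a := lt_of_lt_of_le ha₁pos haI.1
  refine ⟨a, ⟨hapos, by rw [hGeq a hapos]; exact haG⟩, ?_⟩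
  rintro b ⟨hbpos, hbint⟩
  rw [hGeq b hbpos] at hbint
  have : G ψ b = G ψ a := by rw [hbint, haG]
  exact hmono.injOn hbpos hapos this
end

section
/- Let Y be a real random variable whose law has a continuously differentiable density p with p and p' integrable. Let {x} = x − ⌊x⌋ denote the fractional part. Then for every Lipschitz function f : [0,1] → ℝ, E[f({Y/δ})] → ∫_0^1 f(v) dv as δ → 0⁺; i.e., the normalized round-off {Y/δ} converges in distribution to the uniform distribution on [0,1]. -/
open MeasureTheory Set Filter
open scoped NNReal ENNReal

/-- Main quantitative estimate: for a globally bounded continuous `g` and `δ > 0`,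
the round-off expectation is within `2 M ∫|p'| δ` of `(∫ g on [0,1)) * ∫ p`. -/
private lemma roundoff_est (p : ℝ → ℝ) (hp : ContDiff ℝ 1 p) (hpint : Integrable p)
    (hp'int : Integrable (deriv p))
    (g : ℝ → ℝ) (hgc : Continuous g) (M : ℝ) (hMb : ∀ x, |g x| ≤ M)
    {δ : ℝ} (hδ : 0 < δ) :
    |(∫ y, g (Int.fract (y / δ)) * p y) -
      (∫ v in Ico (0:ℝ) 1, g v) * (∫ x, p x)| ≤ 2 * M * (∫ x, |deriv p x|) * δ := by
  have hM0 : 0 ≤ M := le_trans (abs_nonneg _) (hMb 0)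
  set c : ℝ := ∫ v in Ico (0:ℝ) 1, g v with hc_def
  set q : ℝ → ℝ := fun x => p (δ * x) with hq_def
  have hδne : δ ≠ 0 := hδ.ne'
  have hdiffp : ∀ y : ℝ, DifferentiableAt ℝ p y :=
    fun y => (hp.differentiable one_ne_zero).differentiableAt
  -- substitution y = δ x
  have hsub : (∫ y, g (Int.fract (y / δ)) * p y) = δ * ∫ x, g (Int.fract x) * q x := by
    have h1 : (∫ x, g (Int.fract ((δ * x) / δ)) * p (δ * x))
        = |δ⁻¹| • ∫ y, g (Int.fract (y / δ)) * p y :=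
      Measure.integral_comp_mul_left (fun y => g (Int.fract (y / δ)) * p y) δ
    have h2 : ∀ x : ℝ, (δ * x) / δ = x := fun x => by field_simp
    simp only [h2] at h1
    rw [hq_def, h1, abs_of_pos (inv_pos.mpr hδ), smul_eq_mul]
    field_simp
  -- basic integrability facts
  have hqint : Integrable q := hpint.comp_mul_left' hδne
  have hfr : Measurable fun x : ℝ => g (Int.fract x) :=
    hgc.measurable.comp measurable_fract
  have hΦint : Integrable (fun x => g (Int.fract x) * q x) :=
    hqint.bdd_mul (f := fun x => g (Int.fract x)) hfr.aestronglyMeasurable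
      (c := M) (Eventually.of_forall fun x => by rw [Real.norm_eq_abs]; exact hMb _)
  have hcq : Integrable (fun x => c * q x) := hqint.const_mul c
  have habs : Integrable fun y => |deriv p y| := hp'int.abs
  have hcM : |c| ≤ M := by
    have := norm_setIntegral_le_of_norm_le_const (μ := volume) (f := g) (s := Ico (0:ℝ) 1)
      (by rw [Real.volume_Ico]; norm_num)
      (fun x _ => by simpa [Real.norm_eq_abs] using hMb x)
    simpa [Real.volume_real_Ico, Real.norm_eq_abs] using this
  -- the cells
  set s : ℤ → Set ℝ := fun n => Ico (n : ℝ) (n + 1) with hs_def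
  set t : ℤ → Set ℝ := fun n => Ioc (δ * n) (δ * (n + 1)) with ht_def
  have hsu : ⋃ n, s n = univ := iUnion_Ico_intCast ℝ
  have hsd : Pairwise (Function.onFun Disjoint s) := by
    have := pairwise_disjoint_Ico_add_intCast (α := ℝ) (a := 0)
    simpa [hs_def, Function.onFun, zero_add] using this
  have htu : ⋃ n, t n = univ := by
    rw [ht_def]
    ext x
    simp only [mem_iUnion, mem_univ, iff_true, mem_Ioc]
    refine ⟨⌈x / δ⌉ - 1, ?_, ?_⟩
    · have h1 : ((⌈x / δ⌉ - 1 : ℤ) : ℝ) < x / δ := by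
        push_cast
        have := Int.ceil_lt_add_one (x / δ); linarith
      have h2 := (lt_div_iff₀ hδ).mp h1
      rw [mul_comm]; exact h2
    · have h1 : x / δ ≤ ((⌈x / δ⌉ - 1 : ℤ) : ℝ) + 1 := by
        push_cast
        have := Int.le_ceil (x / δ); linarith
      have h2 := (div_le_iff₀ hδ).mp h1
      rw [mul_comm]; exact h2
  have htd : Pairwise (Function.onFun Disjoint t) := by
    intro m n hmn
    rw [Function.onFun, ht_def]
    rw [Set.Ioc_disjoint_Ioc]
    rcases hmn.lt_or_gt with h | h
    · have h' : (m : ℝ) + 1 ≤ n := by exact_mod_cast h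
      refine le_trans (min_le_left _ _) (le_trans ?_ (le_max_right _ _))
      nlinarith
    · have h' : (n : ℝ) + 1 ≤ m := by exact_mod_cast h
      refine le_trans (min_le_right _ _) (le_trans ?_ (le_max_left _ _))
      nlinarith
  -- sums over cells
  have hA : HasSum (fun n => ∫ x in s n, g (Int.fract x) * q x)
      (∫ x, g (Int.fract x) * q x) := by
    have := hasSum_integral_iUnion (μ := volume) (s := s) (fun n => measurableSet_Ico) hsd
      (by rw [hsu]; exact hΦint.integrableOn)
    rwa [hsu, Measure.restrict_univ] at this
  have hC : HasSum (fun n => ∫ x in s n, c * q x) (∫ x, c * q x) := by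
    have := hasSum_integral_iUnion (μ := volume) (s := s) (fun n => measurableSet_Ico) hsd
      (by rw [hsu]; exact hcq.integrableOn)
    rwa [hsu, Measure.restrict_univ] at this
  have hE : HasSum (fun n => ∫ y in t n, |deriv p y|) (∫ y, |deriv p y|) := by
    have := hasSum_integral_iUnion (μ := volume) (s := t) (fun n => measurableSet_Ioc) htd
      (by rw [htu]; exact habs.integrableOn)
    rwa [htu, Measure.restrict_univ] at this
  -- per-cell estimate
  have hkey : ∀ n : ℤ, |(∫ x in s n, g (Int.fract x) * q x) - ∫ x in s n, c * q x|
      ≤ 2 * M * ∫ y in t n, |deriv p y| := by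
    intro n
    set k : ℝ := p (δ * n) with hk_def
    set En : ℝ := ∫ y in t n, |deriv p y| with hEn_def
    have hEn0 : 0 ≤ En := setIntegral_nonneg measurableSet_Ioc fun y _ => abs_nonneg _
    have hgn : Continuous fun x : ℝ => g (x - n) := hgc.comp (continuous_sub_right _)
    have hIg : IntegrableOn (fun x => g (x - (n:ℝ))) (s n) :=
      (hgn.integrableOn_Icc).mono_set Ico_subset_Icc_self
    have h1 : IntegrableOn (fun x => g (x - (n:ℝ)) * q x) (s n) :=
      (hqint.integrableOn).bdd_mul (f := fun x => g (x - (n:ℝ)))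
        (hgn.measurable.aestronglyMeasurable)
        (c := M) (Eventually.of_forall fun x => by rw [Real.norm_eq_abs]; exact hMb _)
    have h2 : IntegrableOn (fun x => c * q x) (s n) := hcq.integrableOn
    have h3 : IntegrableOn (fun x => (g (x - (n:ℝ)) - c) * k) (s n) :=
      (((hgn.sub continuous_const).mul continuous_const).integrableOn_Icc).mono_set
        Ico_subset_Icc_self
    have hvol : volume (s n) = 1 := by
      rw [hs_def]; rw [Real.volume_Ico]; simp
    have hconst : IntegrableOn (fun _ : ℝ => c) (s n) :=
      (integrableOn_const_iff (C := c)).mpr (Or.inr (by rw [hvol]; exact ENNReal.one_lt_top))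
    -- fract = x - n on the cell
    have hfr_eq : ∫ x in s n, g (Int.fract x) * q x = ∫ x in s n, g (x - (n:ℝ)) * q x := by
      refine setIntegral_congr_fun measurableSet_Ico fun x hx => ?_
      have hfl : ⌊x⌋ = n := Int.floor_eq_iff.mpr ⟨hx.1, hx.2⟩
      rw [← Int.self_sub_floor, hfl]
    -- mean of g over the cell
    have hmean : ∫ x in s n, g (x - (n:ℝ)) = c := by
      rw [hs_def]
      rw [setIntegral_congr_set Ico_ae_eq_Ioc,
        ← intervalIntegral.integral_of_le (by linarith : (n:ℝ) ≤ n + 1),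
        intervalIntegral.integral_comp_sub_right g (n:ℝ)]
      simp only [sub_self, add_sub_cancel_left]
      rw [intervalIntegral.integral_of_le (by norm_num : (0:ℝ) ≤ 1),
        hc_def, setIntegral_congr_set Ico_ae_eq_Ioc]
    have hzero : (∫ x in s n, (g (x - (n:ℝ)) - c)) = 0 := by
      rw [integral_sub hIg hconst, hmean, setIntegral_const, measureReal_def, hvol]
      simp
    -- decomposition
    have hint1 : IntegrableOn (fun x => (g (x - (n:ℝ)) - c) * (q x - k)) (s n) :=
      ((h1.sub h2).sub h3).congr (Eventually.of_forall fun x => by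
        simp only [Pi.sub_apply]; ring)
    have hdecomp : (∫ x in s n, g (Int.fract x) * q x) - ∫ x in s n, c * q x
        = ∫ x in s n, (g (x - (n:ℝ)) - c) * (q x - k) := by
      rw [hfr_eq]
      have e1 : (∫ x in s n, g (x - (n:ℝ)) * q x) - ∫ x in s n, c * q x
          = ∫ x in s n, (g (x - (n:ℝ)) * q x - c * q x) := (integral_sub h1 h2).symm
      have e2 : (∫ x in s n, (g (x - (n:ℝ)) * q x - c * q x))
          = ∫ x in s n, ((g (x - (n:ℝ)) - c) * (q x - k) + (g (x - (n:ℝ)) - c) * k) :=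
        integral_congr_ae (Eventually.of_forall fun x => by ring)
      have e3 : (∫ x in s n, ((g (x - (n:ℝ)) - c) * (q x - k) + (g (x - (n:ℝ)) - c) * k))
          = (∫ x in s n, (g (x - (n:ℝ)) - c) * (q x - k))
            + ∫ x in s n, (g (x - (n:ℝ)) - c) * k := integral_add hint1 h3
      have e4 : (∫ x in s n, (g (x - (n:ℝ)) - c) * k)
          = (∫ x in s n, (g (x - (n:ℝ)) - c)) * k := integral_mul_const k _
      rw [e1, e2, e3, e4, hzero, zero_mul, add_zero]
    -- pointwise bound on the cell
    have hb : ∀ x ∈ s n, ‖(g (x - (n:ℝ)) - c) * (q x - k)‖ ≤ 2 * M * En := by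
      intro x hx
      have hx1 : (n:ℝ) ≤ x := hx.1
      have hx2 : x < (n:ℝ) + 1 := hx.2
      have hax : δ * n ≤ δ * x := mul_le_mul_of_nonneg_left hx1 hδ.le
      have hxb : δ * x ≤ δ * ((n:ℝ) + 1) := mul_le_mul_of_nonneg_left hx2.le hδ.le
      have hqk : |q x - k| ≤ En := by
        have ftc : ∫ y in (δ*n)..(δ*x), deriv p y = p (δ*x) - p (δ*n) :=
          intervalIntegral.integral_deriv_eq_sub (fun y _ => hdiffp y)
            (hp'int.intervalIntegrable)
        have e : |q x - k| = |∫ y in (δ*(n:ℝ))..(δ*x), deriv p y| := by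
          rw [ftc, hq_def, hk_def]
        rw [e]
        calc |∫ y in (δ*(n:ℝ))..(δ*x), deriv p y|
            ≤ ∫ y in (δ*(n:ℝ))..(δ*x), |deriv p y| :=
              intervalIntegral.abs_integral_le_integral_abs hax
          _ = ∫ y in Ioc (δ*(n:ℝ)) (δ*x), |deriv p y| :=
              intervalIntegral.integral_of_le hax
          _ ≤ En := by
              rw [hEn_def, ht_def]
              exact setIntegral_mono_set habs.integrableOn
                (Eventually.of_forall fun y => abs_nonneg _)
                (HasSubset.Subset.eventuallyLE (Ioc_subset_Ioc_right hxb))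
      have hg2 : |g (x - (n:ℝ)) - c| ≤ 2 * M := by
        calc |g (x - (n:ℝ)) - c| ≤ |g (x - (n:ℝ))| + |c| := abs_sub _ _
          _ ≤ M + M := add_le_add (hMb _) hcM
          _ = 2 * M := by ring
      rw [Real.norm_eq_abs, abs_mul]
      exact mul_le_mul hg2 hqk (abs_nonneg _) (by positivity)
    rw [hdecomp]
    have := norm_setIntegral_le_of_norm_le_const (μ := volume)
      (by rw [hvol]; exact ENNReal.one_lt_top) hb
    rw [measureReal_def, hvol] at this
    simpa [Real.norm_eq_abs] using this
  -- summation of the estimate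
  have hsum1 : HasSum (fun n => (∫ x in s n, g (Int.fract x) * q x) - ∫ x in s n, c * q x)
      ((∫ x, g (Int.fract x) * q x) - ∫ x, c * q x) := hA.sub hC
  have hsum2 : HasSum (fun n => 2 * M * ∫ y in t n, |deriv p y|)
      (2 * M * ∫ y, |deriv p y|) := hE.mul_left _
  have hmain : |(∫ x, g (Int.fract x) * q x) - ∫ x, c * q x| ≤ 2 * M * ∫ y, |deriv p y| := by
    rw [← hsum1.tsum_eq, ← hsum2.tsum_eq]
    have hsumm : Summable (fun n =>
        |(∫ x in s n, g (Int.fract x) * q x) - ∫ x in s n, c * q x|) :=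
      Summable.of_nonneg_of_le (fun n => abs_nonneg _) hkey hsum2.summable
    calc |∑' n, ((∫ x in s n, g (Int.fract x) * q x) - ∫ x in s n, c * q x)|
        ≤ ∑' n, |(∫ x in s n, g (Int.fract x) * q x) - ∫ x in s n, c * q x| := by
          simpa [Real.norm_eq_abs] using
            norm_tsum_le_tsum_norm (f := fun n =>
              (∫ x in s n, g (Int.fract x) * q x) - ∫ x in s n, c * q x)
              (by simpa [Real.norm_eq_abs] using hsumm)
      _ ≤ ∑' n, (2 * M * ∫ y in t n, |deriv p y|) :=
          Summable.tsum_le_tsum hkey hsumm hsum2.summable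
  -- conclude
  have hqP : (∫ x, q x) = δ⁻¹ * ∫ x, p x := by
    have h := Measure.integral_comp_mul_left p δ
    rw [hq_def]
    rw [show (fun x => p (δ * x)) = fun x : ℝ => p (δ * x) from rfl]
    rw [h, abs_of_pos (inv_pos.mpr hδ), smul_eq_mul]
  have hfin : (∫ y, g (Int.fract (y / δ)) * p y) - c * (∫ x, p x)
      = δ * ((∫ x, g (Int.fract x) * q x) - ∫ x, c * q x) := by
    rw [hsub, MeasureTheory.integral_const_mul, hqP]
    field_simp
  rw [hfin, abs_mul, abs_of_pos hδ]
  calc δ * |(∫ x, g (Int.fract x) * q x) - ∫ x, c * q x|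
      ≤ δ * (2 * M * ∫ y, |deriv p y|) := mul_le_mul_of_nonneg_left hmain hδ.le
    _ = 2 * M * (∫ x, |deriv p x|) * δ := by ring

/-- Asymptotic uniformity of round-off errors: if `Y` has a `C¹` density `p` with `p` and
`p'` integrable, then for every Lipschitz `f : [0,1] → ℝ`,
`E[f({Y/δ})] → ∫_0^1 f(v) dv` as `δ → 0⁺`; i.e. the normalized round-off `{Y/δ}`
converges in distribution to the uniform distribution on `[0,1]`. -/
theorem roundoff_asymptotically_uniform (p : ℝ → ℝ)
    (hp : ContDiff ℝ 1 p) (hpint : Integrable p) (hp'int : Integrable (deriv p))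
    (hppos : ∀ x, 0 ≤ p x) (hpnorm : (∫ x, p x) = 1)
    (f : ℝ → ℝ) (L : NNReal) (hf : LipschitzOnWith L f (Icc 0 1)) :
    Tendsto
      (fun δ : ℝ => ∫ y, f (Int.fract (y / δ))
        ∂(volume.withDensity (fun y => ENNReal.ofReal (p y))))
      (nhdsWithin 0 (Ioi 0)) (nhds (∫ v in Icc (0:ℝ) 1, f v)) := by
  set c : ℝ := ∫ v in Icc (0:ℝ) 1, f v with hc
  set g : ℝ → ℝ := fun x => f (max 0 (min 1 x)) with hg
  have hmem : ∀ x : ℝ, max 0 (min 1 x) ∈ Icc (0:ℝ) 1 :=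
    fun x => ⟨le_max_left _ _, max_le zero_le_one (min_le_left _ _)⟩
  have hclamp : ∀ x y : ℝ, |max 0 (min 1 x) - max 0 (min 1 y)| ≤ |x - y| := by
    intro x y
    calc |max 0 (min 1 x) - max 0 (min 1 y)|
        = |max (min 1 x) 0 - max (min 1 y) 0| := by rw [max_comm, max_comm (0:ℝ)]
      _ ≤ |min 1 x - min 1 y| := abs_max_sub_max_le_abs _ _ _
      _ ≤ max |(1:ℝ) - 1| |x - y| := abs_min_sub_min_le_max _ _ _ _
      _ = |x - y| := by simp
  have hgdist : ∀ x y : ℝ, dist (g x) (g y) ≤ L * dist x y := by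
    intro x y
    calc dist (g x) (g y) ≤ L * dist (max 0 (min 1 x)) (max 0 (min 1 y)) :=
        hf.dist_le_mul _ (hmem x) _ (hmem y)
      _ ≤ L * dist x y := mul_le_mul_of_nonneg_left
          (by rw [Real.dist_eq, Real.dist_eq]; exact hclamp x y) L.coe_nonneg
  have hgc : Continuous g := (LipschitzWith.of_dist_le_mul hgdist).continuous
  set M : ℝ := |f 0| + L with hM
  have hMb : ∀ x, |g x| ≤ M := by
    intro x
    have h0 : (0:ℝ) ∈ Icc (0:ℝ) 1 := ⟨le_refl 0, zero_le_one⟩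
    have hd : dist (g x) (f 0) ≤ L * dist (max 0 (min 1 x)) 0 :=
      hf.dist_le_mul _ (hmem x) 0 h0
    have hdd : dist (max 0 (min 1 x)) 0 ≤ 1 := by
      rw [Real.dist_eq, sub_zero, abs_of_nonneg (le_max_left _ _)]
      exact max_le zero_le_one (min_le_left _ _)
    have hL : |g x - f 0| ≤ L := by
      rw [← Real.dist_eq]
      refine le_trans hd ?_
      calc (L : ℝ) * dist (max 0 (min 1 x)) 0 ≤ L * 1 :=
        mul_le_mul_of_nonneg_left hdd L.coe_nonneg
        _ = L := mul_one _
    calc |g x| = |(g x - f 0) + f 0| := by ring_nf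
      _ ≤ |g x - f 0| + |f 0| := abs_add_le _ _
      _ ≤ L + |f 0| := add_le_add hL le_rfl
      _ = M := by rw [hM]; ring
  have hfg : ∀ x : ℝ, f (Int.fract x) = g (Int.fract x) := by
    intro x
    have h1 : (0:ℝ) ≤ Int.fract x := Int.fract_nonneg x
    have h2 : Int.fract x ≤ 1 := (Int.fract_lt_one x).le
    rw [hg]
    simp only []
    rw [min_eq_right h2, max_eq_right h1]
  have hcg : (∫ v in Ico (0:ℝ) 1, g v) = c := by
    rw [setIntegral_congr_set Ico_ae_eq_Icc, hc]
    refine setIntegral_congr_fun measurableSet_Icc fun v hv => ?_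
    rw [hg]
    simp only []
    rw [min_eq_right hv.2, max_eq_right hv.1]
  have hpm : Measurable fun y => Real.toNNReal (p y) :=
    measurable_real_toNNReal.comp hp.continuous.measurable
  have hI : ∀ δ : ℝ,
      (∫ y, f (Int.fract (y / δ)) ∂(volume.withDensity fun y => ENNReal.ofReal (p y)))
      = ∫ y, g (Int.fract (y / δ)) * p y := by
    intro δ
    have hwd : (volume.withDensity fun y => ENNReal.ofReal (p y))
        = volume.withDensity fun y => ((Real.toNNReal (p y) : ℝ≥0) : ℝ≥0∞) := rfl
    rw [hwd, integral_withDensity_eq_integral_smul hpm]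
    refine integral_congr_ae (Eventually.of_forall fun y => ?_)
    show (p y).toNNReal • f (Int.fract (y / δ)) = g (Int.fract (y / δ)) * p y
    rw [NNReal.smul_def, smul_eq_mul, Real.coe_toNNReal _ (hppos y), hfg, mul_comm]
  simp only [hI]
  set K : ℝ := 2 * M * (∫ x, |deriv p x|) with hK
  have hle : ∀ δ ∈ Ioi (0:ℝ), |(∫ y, g (Int.fract (y / δ)) * p y) - c| ≤ K * δ := by
    intro δ hδ
    have h := roundoff_est p hp hpint hp'int g hgc M hMb hδ
    rw [hcg, hpnorm, mul_one] at h
    exact h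
  rw [tendsto_iff_dist_tendsto_zero]
  apply squeeze_zero' (Eventually.of_forall fun δ => dist_nonneg) (g := fun δ => K * δ)
  · filter_upwards [self_mem_nhdsWithin] with δ hδ
    rw [Real.dist_eq]
    exact hle δ hδ
  · have h : Tendsto (fun δ : ℝ => K * δ) (nhds 0) (nhds 0) := by
      simpa using (continuous_mul_left K).tendsto (0:ℝ)
    exact h.mono_left nhdsWithin_le_nhds
end
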